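/- Let (β̂₁, β̂₂) be Kyle's two-period equilibrium: b̂₁ ∈ (0,1) the unique solution of 1 = b̂₁²/((1 − b̂₁²)²(1 + b̂₁²)), b̂₂ := 1, Σ̂₀ := Σ₀, Σ̂₁ := Σ̂₀/(1 + b̂₁²), β̂₁ := b̂₁σᵤ/√(Σ̂₀Δ), β̂₂ := b̂₂σᵤ/√(Σ̂₁Δ). There exists ε > 0 such that for every starting point β⁽⁰⁾ ∈ ℝ² with 0 < ‖β⁽⁰⁾ − (β̂₁, β̂₂)‖_∞ < ε (sup norm), all iterates β⁽ᵐ⁺¹⁾ := T(β⁽ᵐ⁾) are well defined (remain in the domain of T) and β⁽ᵐ⁾ → (β̂₁, β̂₂) as m → ∞. -/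

import Mathlib

/-!
Rescaling by `σu / √(ΔΣ₀)` conjugates the policy-iteration map to the same map with unit
parameters. There, writing `c = √(1 + b̂₁²)`, the equilibrium is `(b̂₁, c)` with `b̂₁ = c (2 - c²)`
and `c⁶ - 4c⁴ + 3c² + 1 = 0`. The Jacobian at the equilibrium has a vanishing second column and
first column `((c⁴ - c² + 1) / (5c⁴ - 7c² - 2), 2 - c²)`, whose entries have modulus `< 1` because
`1 < c² < 181/125`. So the Jacobian has sup-operator norm `< 1`, and the map is a contraction
towards the equilibrium on a small ball, which is also contained in the (open) domain.
-/

open Filter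

/-- First coordinate of the two-period policy-iteration map. -/
noncomputable def T2p1 (Δ σu Sig0 β1 β2 : ℝ) : ℝ :=
  (β1 ^ 2 * Δ * Sig0 + σu ^ 2) *
      (β1 * Δ * Sig0 * (β1 - β2) ^ 2 + σu ^ 2 * (β1 - 2 * β2)) /
    (β1 * Δ * Sig0 *
      (β1 * Δ * Sig0 * (β1 ^ 2 - 4 * β1 * β2 + β2 ^ 2) + σu ^ 2 * (β1 - 4 * β2)))

/-- Second coordinate of the two-period policy-iteration map. -/
noncomputable def T2p2 (Δ σu Sig0 β1 β2 : ℝ) : ℝ :=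
  (Δ * Sig0 * (β1 ^ 2 + β2 ^ 2) + σu ^ 2) / (2 * β2 * Δ * Sig0)

/-- The two-period policy-iteration map as a map `ℝ² → ℝ²`. -/
noncomputable def T2pMap (Δ σu Sig0 : ℝ) (p : ℝ × ℝ) : ℝ × ℝ :=
  (T2p1 Δ σu Sig0 p.1 p.2, T2p2 Δ σu Sig0 p.1 p.2)

/-- The domain of the two-period map: both denominators are nonzero. -/
def T2pDom (Δ σu Sig0 : ℝ) (p : ℝ × ℝ) : Prop :=
  p.1 * Δ * Sig0 *
      (p.1 * Δ * Sig0 * (p.1 ^ 2 - 4 * p.1 * p.2 + p.2 ^ 2) +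
        σu ^ 2 * (p.1 - 4 * p.2)) ≠ 0 ∧
  2 * p.2 * Δ * Sig0 ≠ 0

open Topology

section LocalAttraction

variable {𝕜 E : Type*} [NontriviallyNormedField 𝕜] [NormedAddCommGroup E] [NormedSpace 𝕜 E]

def IsLocallyAttracting (f : E → E) (P : E → Prop) (z : E) : Prop :=
  ∃ ε > 0, ∀ p, ‖p - z‖ < ε →
    (∀ m : ℕ, P (f^[m] p)) ∧ Tendsto (fun m : ℕ => f^[m] p) atTop (𝓝 z)

theorem isLocallyAttracting_of_contraction {f : E → E} {P : E → Prop} {z : E} {K ε : ℝ}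
    (hε : 0 < ε) (hK₀ : 0 ≤ K) (hK₁ : K < 1)
    (hf : ∀ p, ‖p - z‖ < ε → ‖f p - z‖ ≤ K * ‖p - z‖) (hP : ∀ p, ‖p - z‖ < ε → P p) :
    IsLocallyAttracting f P z := by
  refine ⟨ε, hε, fun p hp => ?_⟩
  have hsmall : ∀ m : ℕ, K ^ m * ‖p - z‖ < ε := fun m =>
    (mul_le_of_le_one_left (norm_nonneg _) (pow_le_one₀ hK₀ hK₁.le)).trans_lt hp
  have hdecay : ∀ m : ℕ, ‖f^[m] p - z‖ ≤ K ^ m * ‖p - z‖ := by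
    intro m
    induction m with
    | zero => simp
    | succ m ih =>
      rw [Function.iterate_succ_apply', pow_succ', mul_assoc]
      exact (hf _ (ih.trans_lt (hsmall m))).trans (mul_le_mul_of_nonneg_left ih hK₀)
  refine ⟨fun m => hP _ ((hdecay m).trans_lt (hsmall m)), ?_⟩
  rw [tendsto_iff_norm_sub_tendsto_zero]
  refine squeeze_zero (fun m => norm_nonneg _) hdecay ?_
  simpa using (tendsto_pow_atTop_nhds_zero_of_lt_one hK₀ hK₁).mul_const ‖p - z‖

theorem HasFDerivAt.eventually_norm_sub_le {f : E → E} {f' : E →L[𝕜] E} {z : E} {K : ℝ}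
    (hf : HasFDerivAt f f' z) (hz : f z = z) (hK : ‖f'‖ < K) :
    ∀ᶠ p in 𝓝 z, ‖f p - z‖ ≤ K * ‖p - z‖ := by
  filter_upwards [hf.isLittleO.bound (sub_pos.2 hK)] with p hp
  calc ‖f p - z‖ = ‖(f p - f z - f' (p - z)) + f' (p - z)‖ := by rw [hz]; abel_nf
    _ ≤ (K - ‖f'‖) * ‖p - z‖ + ‖f'‖ * ‖p - z‖ := norm_add_le_of_le hp (f'.le_opNorm _)
    _ = K * ‖p - z‖ := by ring

theorem HasFDerivAt.isLocallyAttracting {f : E → E} {f' : E →L[𝕜] E} {P : E → Prop} {z : E}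
    (hf : HasFDerivAt f f' z) (hz : f z = z) (hf' : ‖f'‖ < 1) (hP : ∀ᶠ p in 𝓝 z, P p) :
    IsLocallyAttracting f P z := by
  have hcontr := hf.eventually_norm_sub_le hz (K := (‖f'‖ + 1) / 2) (by linarith)
  obtain ⟨ε, hε, hball⟩ := Metric.eventually_nhds_iff.1 (hcontr.and hP)
  have hball' : ∀ p, ‖p - z‖ < ε → _ := fun p hp => hball (by rwa [dist_eq_norm])
  exact isLocallyAttracting_of_contraction hε (by positivity) (by linarith)
    (fun p hp => (hball' p hp).1) (fun p hp => (hball' p hp).2)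

theorem IsLocallyAttracting.of_semiconj_smul {f g : E → E} {P Q : E → Prop} {z : E} {r : 𝕜}
    (h : IsLocallyAttracting f Q z) (hr : r ≠ 0) (hfg : ∀ a, g (r • a) = r • f a)
    (hPQ : ∀ a, P (r • a) ↔ Q a) : IsLocallyAttracting g P (r • z) := by
  obtain ⟨ε, hε, hf⟩ := h
  refine ⟨‖r‖ * ε, by positivity, fun p hp => ?_⟩
  obtain ⟨a, rfl⟩ : ∃ a, p = r • a := ⟨r⁻¹ • p, (smul_inv_smul₀ hr p).symm⟩
  have hconj : ∀ m : ℕ, g^[m] (r • a) = r • f^[m] a := fun m =>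
    (Function.Semiconj.iterate_right (f := (r • ·)) (fun a => (hfg a).symm) m a).symm
  rw [← smul_sub, norm_smul] at hp
  obtain ⟨hQ, hlim⟩ := hf a (lt_of_mul_lt_mul_left hp (norm_nonneg r))
  simp only [hconj, hPQ]
  exact ⟨hQ, hlim.const_smul r⟩

end LocalAttraction

section Derivatives

theorem fderiv_apply_eq_of_hasDerivAt_partial {g : ℝ × ℝ → ℝ} {z : ℝ × ℝ} {d₁ d₂ : ℝ}
    (hg : DifferentiableAt ℝ g z) (h₁ : HasDerivAt (fun t => g (t, z.2)) d₁ z.1)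
    (h₂ : HasDerivAt (fun t => g (z.1, t)) d₂ z.2) (v : ℝ × ℝ) :
    fderiv ℝ g z v = v.1 * d₁ + v.2 * d₂ := by
  have e₁ : fderiv ℝ g z (1, 0) = d₁ :=
    (hg.hasFDerivAt.comp_hasDerivAt z.1
      ((hasDerivAt_id' z.1).prodMk (hasDerivAt_const z.1 z.2))).unique h₁
  have e₂ : fderiv ℝ g z (0, 1) = d₂ :=
    (hg.hasFDerivAt.comp_hasDerivAt z.2
      ((hasDerivAt_const z.2 z.1).prodMk (hasDerivAt_id' z.2))).unique h₂
  have hv : v = v.1 • ((1 : ℝ), (0 : ℝ)) + v.2 • ((0 : ℝ), (1 : ℝ)) := by ext <;> simp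
  rw [hv, map_add, map_smul, map_smul, e₁, e₂, smul_eq_mul, smul_eq_mul]
  simp

theorem norm_fderiv_le_of_hasDerivAt_partial {g : ℝ × ℝ → ℝ} {z : ℝ × ℝ} {d₁ d₂ : ℝ}
    (hg : DifferentiableAt ℝ g z) (h₁ : HasDerivAt (fun t => g (t, z.2)) d₁ z.1)
    (h₂ : HasDerivAt (fun t => g (z.1, t)) d₂ z.2) :
    ‖fderiv ℝ g z‖ ≤ |d₁| + |d₂| := by
  refine ContinuousLinearMap.opNorm_le_bound _ (by positivity) fun v => ?_
  have hv₁ : |v.1| ≤ ‖v‖ := norm_fst_le v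
  have hv₂ : |v.2| ≤ ‖v‖ := norm_snd_le v
  rw [fderiv_apply_eq_of_hasDerivAt_partial hg h₁ h₂, Real.norm_eq_abs]
  calc |v.1 * d₁ + v.2 * d₂| ≤ |v.1| * |d₁| + |v.2| * |d₂| := by
        rw [← abs_mul, ← abs_mul]; exact abs_add_le _ _
    _ ≤ ‖v‖ * |d₁| + ‖v‖ * |d₂| := by gcongr
    _ = (|d₁| + |d₂|) * ‖v‖ := by ring

theorem HasDerivAt.div_of_eq_mul {𝕜 : Type*} [NontriviallyNormedField 𝕜] {N D : 𝕜 → 𝕜}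
    {N' D' x q : 𝕜} (hN : HasDerivAt N N' x) (hD : HasDerivAt D D' x) (hDx : D x ≠ 0)
    (hq : N x = q * D x) : HasDerivAt (fun t => N t / D t) ((N' - q * D') / D x) x := by
  refine (hN.fun_div hD hDx).congr_deriv ?_
  rw [hq]
  field_simp

end Derivatives

section PolicyIteration

theorem T2pMap_smul {Δ σu Sig0 r : ℝ} (hr : r ≠ 0) (hk : Δ * Sig0 ≠ 0)
    (hσ : σu ^ 2 = r ^ 2 * (Δ * Sig0)) (a : ℝ × ℝ) :
    T2pMap Δ σu Sig0 (r • a) = r • T2pMap 1 1 1 a := by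
  have hscale : ∀ {s : ℝ}, s ≠ 0 → ∀ N D : ℝ, r * (N / D) = s * (r * N) / (s * D) :=
    fun hs N D => by rw [mul_div_mul_left _ _ hs, mul_div_assoc]
  ext
  · simp only [T2pMap, T2p1, Prod.smul_fst, Prod.smul_snd, smul_eq_mul, hσ]
    rw [hscale (s := r ^ 4 * (Δ * Sig0) ^ 2) (by positivity)]
    congr 1 <;> ring
  · simp only [T2pMap, T2p2, Prod.smul_fst, Prod.smul_snd, smul_eq_mul, hσ]
    rw [hscale (mul_ne_zero hr hk)]
    congr 1 <;> ring

theorem T2pDom_smul_iff {Δ σu Sig0 r : ℝ} (hr : r ≠ 0) (hk : Δ * Sig0 ≠ 0)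
    (hσ : σu ^ 2 = r ^ 2 * (Δ * Sig0)) (a : ℝ × ℝ) :
    T2pDom Δ σu Sig0 (r • a) ↔ T2pDom 1 1 1 a := by
  have hscale : ∀ {s : ℝ}, s ≠ 0 → ∀ X Y : ℝ, X = s * Y → (X ≠ 0 ↔ Y ≠ 0) :=
    fun hs X Y h => by rw [h, mul_ne_zero_iff, and_iff_right hs]
  simp only [T2pDom, Prod.smul_fst, Prod.smul_snd, smul_eq_mul, hσ]
  exact and_congr (hscale (s := r ^ 4 * (Δ * Sig0) ^ 2) (by positivity) _ _ (by ring))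
    (hscale (mul_ne_zero hr hk) _ _ (by ring))

theorem isOpen_T2pDom (Δ σu Sig0 : ℝ) : IsOpen {p | T2pDom Δ σu Sig0 p} :=
  (isOpen_ne_fun (by fun_prop) continuous_const).inter
    (isOpen_ne_fun (by fun_prop) continuous_const)

theorem differentiableAt_T2pMap {Δ σu Sig0 : ℝ} {p : ℝ × ℝ} (hp : T2pDom Δ σu Sig0 p) :
    DifferentiableAt ℝ (T2pMap Δ σu Sig0) p := by
  obtain ⟨h₁, h₂⟩ := hp
  unfold T2pMap T2p1 T2p2
  fun_prop (disch := assumption)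

theorem T2p1_one (x y : ℝ) : T2p1 1 1 1 x y =
    (x ^ 2 + 1) * (x * (x - y) ^ 2 + (x - 2 * y)) /
      (x * (x * (x ^ 2 - 4 * x * y + y ^ 2) + (x - 4 * y))) := by
  simp only [T2p1, one_pow, mul_one, one_mul]

theorem T2p2_one (x y : ℝ) : T2p2 1 1 1 x y = (x ^ 2 + y ^ 2 + 1) / (2 * y) := by
  simp only [T2p2, one_pow, mul_one, one_mul]

end PolicyIteration

section UnitEquilibrium

variable {b c : ℝ}

/- `181/125` separates the root `c² ≈ 1.4450` from `(4 + √22)/6 ≈ 1.4484`, beyond which the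
Jacobian entry `(c⁴ - c² + 1) / (5c⁴ - 7c² - 2)` leaves `(-1, 1)`. -/
theorem sq_lt_of_sextic (hc : c ^ 6 - 4 * c ^ 4 + 3 * c ^ 2 + 1 = 0) (hlt : c ^ 2 < 2) :
    c ^ 2 < 181 / 125 := by
  have hs : (c ^ 2) ^ 3 - 4 * (c ^ 2) ^ 2 + 3 * c ^ 2 + 1 = 0 := by linear_combination hc
  by_contra! h
  nlinarith [mul_nonneg (sub_nonneg.2 h) (sub_nonneg.2 hlt.le)]

theorem T2p1_one_den_eq (hb : b = c * (2 - c ^ 2)) (hc : c ^ 6 - 4 * c ^ 4 + 3 * c ^ 2 + 1 = 0) :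
    b * (b * (b ^ 2 - 4 * b * c + c ^ 2) + (b - 4 * c)) = 2 * (5 * c ^ 4 - 7 * c ^ 2 - 2) := by
  subst hb
  linear_combination (c ^ 6 - 2 * c ^ 2 + 4) * hc

theorem quartic_neg_of_sq_lt (hc₂ : c ^ 2 < 181 / 125) : 5 * c ^ 4 - 7 * c ^ 2 - 2 < 0 := by
  nlinarith [sq_nonneg c]

theorem T2p1_one_den_ne_zero (hb : b = c * (2 - c ^ 2)) (hc : c ^ 6 - 4 * c ^ 4 + 3 * c ^ 2 + 1 = 0)
    (hc₂ : c ^ 2 < 181 / 125) :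
    b * (b * (b ^ 2 - 4 * b * c + c ^ 2) + (b - 4 * c)) ≠ 0 := by
  rw [T2p1_one_den_eq hb hc]
  exact mul_ne_zero two_ne_zero (quartic_neg_of_sq_lt hc₂).ne

theorem T2pDom_one_equilibrium (hb : b = c * (2 - c ^ 2))
    (hc : c ^ 6 - 4 * c ^ 4 + 3 * c ^ 2 + 1 = 0) (hc₂ : c ^ 2 < 181 / 125) :
    T2pDom 1 1 1 (b, c) := by
  have hc₀ : c ≠ 0 := by rintro rfl; norm_num at hc
  simp only [T2pDom, one_pow, mul_one, one_mul]
  exact ⟨T2p1_one_den_ne_zero hb hc hc₂, by positivity⟩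

theorem T2pMap_one_equilibrium (hb : b = c * (2 - c ^ 2))
    (hc : c ^ 6 - 4 * c ^ 4 + 3 * c ^ 2 + 1 = 0) (hc₂ : c ^ 2 < 181 / 125) :
    T2pMap 1 1 1 (b, c) = (b, c) := by
  have hc₀ : c ≠ 0 := by rintro rfl; norm_num at hc
  ext
  · show T2p1 1 1 1 b c = b
    rw [T2p1_one, div_eq_iff (T2p1_one_den_ne_zero hb hc hc₂)]
    subst hb
    linear_combination (2 * c ^ 7 - 8 * c ^ 5 + 9 * c ^ 3) * hc
  · show T2p2 1 1 1 b c = c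
    rw [T2p2_one, div_eq_iff (by positivity)]
    subst hb
    linear_combination hc

theorem hasDerivAt_T2p1_one_fst (hb : b = c * (2 - c ^ 2))
    (hc : c ^ 6 - 4 * c ^ 4 + 3 * c ^ 2 + 1 = 0) (hc₂ : c ^ 2 < 181 / 125) :
    HasDerivAt (fun t => T2p1 1 1 1 t c) ((c ^ 4 - c ^ 2 + 1) / (5 * c ^ 4 - 7 * c ^ 2 - 2)) b := by
  simp only [T2p1_one]
  have hN := ((hasDerivAt_pow 2 b).add_const 1).fun_mul
    (((hasDerivAt_id' b).fun_mul (((hasDerivAt_id' b).sub_const c).fun_pow 2)).fun_add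
      ((hasDerivAt_id' b).sub_const (2 * c)))
  have hD := (hasDerivAt_id' b).fun_mul (((hasDerivAt_id' b).fun_mul
    (((hasDerivAt_pow 2 b).fun_sub (((hasDerivAt_id' b).const_mul 4).mul_const c)).add_const
      (c ^ 2))).fun_add ((hasDerivAt_id' b).sub_const (4 * c)))
  refine (hN.div_of_eq_mul hD (T2p1_one_den_ne_zero hb hc hc₂) (q := b) ?_).congr_deriv ?_
  · subst hb
    linear_combination (2 * c ^ 7 - 8 * c ^ 5 + 9 * c ^ 3) * hc
  · have hw := (quartic_neg_of_sq_lt hc₂).ne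
    rw [T2p1_one_den_eq hb hc, div_eq_div_iff (by positivity) hw]
    subst hb
    norm_num
    linear_combination
      ((c ^ 6 - 8 * c ^ 4 + 14 * c ^ 2 - 1) * (5 * c ^ 4 - 7 * c ^ 2 - 2)) * hc

theorem hasDerivAt_T2p1_one_snd (hb : b = c * (2 - c ^ 2))
    (hc : c ^ 6 - 4 * c ^ 4 + 3 * c ^ 2 + 1 = 0) (hc₂ : c ^ 2 < 181 / 125) :
    HasDerivAt (fun t => T2p1 1 1 1 b t) 0 c := by
  simp only [T2p1_one]
  have hN := (((((hasDerivAt_id' c).const_sub b).fun_pow 2).const_mul b).fun_add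
    (((hasDerivAt_id' c).const_mul 2).const_sub b)).const_mul (b ^ 2 + 1)
  have hD := (((((hasDerivAt_id' c).const_mul (4 * b)).const_sub (b ^ 2)).fun_add
    ((hasDerivAt_id' c).fun_pow 2)).const_mul b |>.fun_add
      (((hasDerivAt_id' c).const_mul 4).const_sub b)).const_mul b
  refine (hN.div_of_eq_mul hD (T2p1_one_den_ne_zero hb hc hc₂) (q := b) ?_).congr_deriv ?_
  · subst hb
    linear_combination (2 * c ^ 7 - 8 * c ^ 5 + 9 * c ^ 3) * hc
  · rw [div_eq_zero_iff]
    left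
    subst hb
    norm_num
    linear_combination (2 * c ^ 6 - 8 * c ^ 4 + 10 * c ^ 2 - 2) * hc

theorem hasDerivAt_T2p2_one_fst (hb : b = c * (2 - c ^ 2)) (hc₀ : c ≠ 0) :
    HasDerivAt (fun t => T2p2 1 1 1 t c) (2 - c ^ 2) b := by
  simp only [T2p2_one]
  refine ((((hasDerivAt_pow 2 b).add_const (c ^ 2)).add_const 1).div_const (2 * c)).congr_deriv ?_
  subst hb
  field_simp
  ring

theorem hasDerivAt_T2p2_one_snd (hb : b = c * (2 - c ^ 2))
    (hc : c ^ 6 - 4 * c ^ 4 + 3 * c ^ 2 + 1 = 0) (hc₀ : c ≠ 0) :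
    HasDerivAt (fun t => T2p2 1 1 1 b t) 0 c := by
  simp only [T2p2_one]
  have hN := ((hasDerivAt_pow 2 c).const_add (b ^ 2)).add_const 1
  have hD := (hasDerivAt_id' c).const_mul 2
  refine (hN.div_of_eq_mul hD (by positivity) (q := c) ?_).congr_deriv ?_
  · subst hb
    linear_combination hc
  · rw [div_eq_zero_iff]
    left
    norm_num
    ring

theorem norm_fderiv_T2pMap_one_lt_one (hb : b = c * (2 - c ^ 2))
    (hc : c ^ 6 - 4 * c ^ 4 + 3 * c ^ 2 + 1 = 0) (hc₁ : 1 < c ^ 2) (hc₂ : c ^ 2 < 181 / 125) :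
    ‖fderiv ℝ (T2pMap 1 1 1) (b, c)‖ < 1 := by
  have hc₀ : c ≠ 0 := by rintro rfl; norm_num at hc
  have hT := differentiableAt_T2pMap (T2pDom_one_equilibrium hb hc hc₂)
  have hw := quartic_neg_of_sq_lt hc₂
  have hd₁₁ : |(c ^ 4 - c ^ 2 + 1) / (5 * c ^ 4 - 7 * c ^ 2 - 2)| < 1 := by
    rw [abs_div, abs_of_pos (by nlinarith), abs_of_neg hw, div_lt_one (by linarith)]
    nlinarith
  have hd₂₁ : |2 - c ^ 2| < 1 := abs_lt.2 ⟨by linarith, by linarith⟩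
  have hg₁ := norm_fderiv_le_of_hasDerivAt_partial hT.fst
    (hasDerivAt_T2p1_one_fst hb hc hc₂) (hasDerivAt_T2p1_one_snd hb hc hc₂)
  have hg₂ := norm_fderiv_le_of_hasDerivAt_partial hT.snd
    (hasDerivAt_T2p2_one_fst hb hc₀) (hasDerivAt_T2p2_one_snd hb hc hc₀)
  rw [abs_zero, add_zero] at hg₁ hg₂
  rw [show T2pMap 1 1 1 = fun p => ((T2pMap 1 1 1 p).1, (T2pMap 1 1 1 p).2) from rfl,
    hT.fst.fderiv_prodMk hT.snd, ContinuousLinearMap.opNorm_prod, Prod.norm_def]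
  exact max_lt (hg₁.trans_lt hd₁₁) (hg₂.trans_lt hd₂₁)

theorem isLocallyAttracting_T2pMap_one (hb : b = c * (2 - c ^ 2))
    (hc : c ^ 6 - 4 * c ^ 4 + 3 * c ^ 2 + 1 = 0) (hc₁ : 1 < c ^ 2) (hc₂ : c ^ 2 < 181 / 125) :
    IsLocallyAttracting (T2pMap 1 1 1) (T2pDom 1 1 1) (b, c) := by
  have hdom := T2pDom_one_equilibrium hb hc hc₂
  exact (differentiableAt_T2pMap hdom).hasFDerivAt.isLocallyAttracting
    (T2pMap_one_equilibrium hb hc hc₂) (norm_fderiv_T2pMap_one_lt_one hb hc hc₁ hc₂)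
    ((isOpen_T2pDom 1 1 1).mem_nhds hdom)

end UnitEquilibrium

theorem eq_and_sextic_of_kyle_equation {b c : ℝ} (hb : b ∈ Set.Ioo (0 : ℝ) 1)
    (hkyle : 1 = b ^ 2 / ((1 - b ^ 2) ^ 2 * (1 + b ^ 2))) (hc₀ : 0 ≤ c) (hc : c ^ 2 = 1 + b ^ 2) :
    b = c * (2 - c ^ 2) ∧ c ^ 6 - 4 * c ^ 4 + 3 * c ^ 2 + 1 = 0 ∧
      1 < c ^ 2 ∧ c ^ 2 < 181 / 125 := by
  obtain ⟨hb₀, hb₁⟩ := hb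
  have hb2 : 0 < b ^ 2 ∧ b ^ 2 < 1 := ⟨by positivity, by nlinarith⟩
  rw [eq_div_iff (by nlinarith), one_mul] at hkyle
  have hsextic : c ^ 6 - 4 * c ^ 4 + 3 * c ^ 2 + 1 = 0 := by
    rw [show c ^ 6 = (c ^ 2) ^ 3 by ring, show c ^ 4 = (c ^ 2) ^ 2 by ring, hc]
    linear_combination hkyle
  have hsq : b ^ 2 = (c * (2 - c ^ 2)) ^ 2 := by rw [mul_pow, hc]; linear_combination -hkyle
  have hc₁ : 1 < c ^ 2 := by linarith
  refine ⟨(sq_eq_sq₀ hb₀.le (by rw [hc]; nlinarith)).1 hsq, hsextic, hc₁,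
    sq_lt_of_sextic hsextic (by linarith)⟩

theorem kyle_equilibrium_eq_smul {Δ σu Sig0 b c : ℝ} (hΔ : 0 < Δ) (hSig : 0 < Sig0)
    (hc₀ : 0 < c) (hc : c ^ 2 = 1 + b ^ 2) :
    ((b * σu / √(Sig0 * Δ), 1 * σu / √(Sig0 / (1 + b ^ 2) * Δ)) : ℝ × ℝ) =
      (σu / √(Sig0 * Δ)) • (b, c) := by
  have hsqrt : √(Sig0 / (1 + b ^ 2) * Δ) = √(Sig0 * Δ) / c := by
    rw [← hc, div_mul_eq_mul_div, Real.sqrt_div (by positivity), Real.sqrt_sq hc₀.le]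
  have : 0 < √(Sig0 * Δ) := by positivity
  ext
  · simp only [Prod.smul_fst, smul_eq_mul]
    ring
  · simp only [Prod.smul_snd, smul_eq_mul, hsqrt]
    field_simp

/-- Local stability for two trading periods: there exists `ε > 0` such that for every
starting point `β⁰` with `0 < ‖β⁰ - (β̂₁, β̂₂)‖ < ε` (sup norm on `ℝ × ℝ`), all iterates
`β⁽ᵐ⁾ := T^[m] β⁰` remain in the domain of `T` and converge to `(β̂₁, β̂₂)`. -/
theorem two_period_locally_stable (Δ σu Sig0 : ℝ) (hΔ : 0 < Δ)
    (hσ : 0 < σu) (hSig : 0 < Sig0) (b1 : ℝ) (hb1 : b1 ∈ Set.Ioo (0 : ℝ) 1)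
    (hb1eq : 1 = b1 ^ 2 / ((1 - b1 ^ 2) ^ 2 * (1 + b1 ^ 2))) :
    let β1 : ℝ := b1 * σu / Real.sqrt (Sig0 * Δ)
    let β2 : ℝ := 1 * σu / Real.sqrt (Sig0 / (1 + b1 ^ 2) * Δ)
    ∃ ε > 0, ∀ p0 : ℝ × ℝ,
      0 < ‖p0 - (β1, β2)‖ → ‖p0 - (β1, β2)‖ < ε →
      (∀ m : ℕ, T2pDom Δ σu Sig0 ((T2pMap Δ σu Sig0)^[m] p0)) ∧
      Tendsto (fun m : ℕ => (T2pMap Δ σu Sig0)^[m] p0) atTop (nhds (β1, β2)) := by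
  intro β1 β2
  set c := √(1 + b1 ^ 2)
  have hc₀ : 0 < c := Real.sqrt_pos.2 (by positivity)
  have hc : c ^ 2 = 1 + b1 ^ 2 := Real.sq_sqrt (by positivity)
  obtain ⟨hbc, hsextic, hc₁, hc₂⟩ := eq_and_sextic_of_kyle_equation hb1 hb1eq hc₀.le hc
  set r := σu / √(Sig0 * Δ) with hr_def
  have hr : r ≠ 0 := by positivity
  have hk : Δ * Sig0 ≠ 0 := by positivity
  have hσr : σu ^ 2 = r ^ 2 * (Δ * Sig0) := by
    rw [hr_def, div_pow, Real.sq_sqrt (by positivity)]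
    field_simp
  obtain ⟨ε, hε, hattr⟩ := (isLocallyAttracting_T2pMap_one hbc hsextic hc₁ hc₂).of_semiconj_smul
    hr (T2pMap_smul hr hk hσr) (T2pDom_smul_iff hr hk hσr)
  rw [show (β1, β2) = r • (b1, c) from kyle_equilibrium_eq_smul hΔ hSig hc₀ hc]
  exact ⟨ε, hε, fun p _ hp => hattr p hp⟩
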